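/- Let B be a Banach limit on ℕ, let X be a nonempty set, let L be a coherent lower prevision on X, and let T : X → X be any map. For each gamble f on X, define the gamble f_L on ℕ by f_L(n) = L(f∘T^n) (where T^n is the n-fold composition of T; f_L is bounded since inf f ≤ L(f∘T^n) ≤ sup f), and define L_B(f) := B(f_L). Then: (1) L_B is a coherent lower prevision on X satisfying L_B(f∘T) = L_B(f) for every gamble f; (2) if L point-wise dominates a coherent lower prevision A on all gambles with A(f∘T) ≥ A(f) for all gambles f, then L_B point-wise dominates A; (3) if L = P is a coherent prevision, then P_B is a coherent prevision on X with P_B(f∘T) = P_B(f) for every gamble f; (4) if L = P is a coherent prevision with P(f∘T) = P(f) for every gamble f, then P_B = P. -/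

import Mathlib

def IsGamble {X : Type*} (f : X → ℝ) : Prop :=
  BddAbove (Set.range f) ∧ BddBelow (Set.range f)

def IsCoherentLowerPrevision {X : Type*} (L : (X → ℝ) → ℝ) : Prop :=
  (∀ f : X → ℝ, IsGamble f → sInf (Set.range f) ≤ L f) ∧
  (∀ f g : X → ℝ, IsGamble f → IsGamble g → L f + L g ≤ L (f + g)) ∧
  (∀ f : X → ℝ, IsGamble f → ∀ c : ℝ, 0 ≤ c → L (c • f) = c * L f)

def IsCoherentPrevision {X : Type*} (P : (X → ℝ) → ℝ) : Prop :=
  (∀ f g : X → ℝ, IsGamble f → IsGamble g → P (f + g) = P f + P g) ∧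
  (∀ f : X → ℝ, IsGamble f → sInf (Set.range f) ≤ P f)

def IsTransformationMonoid {X : Type*} (𝒯 : Set (X → X)) : Prop :=
  id ∈ 𝒯 ∧ ∀ S ∈ 𝒯, ∀ T ∈ 𝒯, S ∘ T ∈ 𝒯

def Dominating {X : Type*} (L : (X → ℝ) → ℝ) : Set ((X → ℝ) → ℝ) :=
  {P | IsCoherentPrevision P ∧ ∀ f : X → ℝ, IsGamble f → L f ≤ P f}

def IsBanachLimit (B : (ℕ → ℝ) → ℝ) : Prop :=
  IsCoherentPrevision B ∧
  ∀ g : ℕ → ℝ, IsGamble g → B (fun n => g (n + 1)) = B g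

noncomputable def transferLB {X : Type*} (B : (ℕ → ℝ) → ℝ) (L : (X → ℝ) → ℝ)
    (T : X → X) : (X → ℝ) → ℝ :=
  fun f => B (fun n => L (f ∘ T^[n]))

/-!
Superadditivity, non-negative homogeneity and (for a prevision) additivity of `L` pass to the
sequences `n ↦ L (f ∘ T^[n])` and, since a coherent prevision is monotone and real-linear, through
`B`. Replacing `f` by `f ∘ T` shifts that sequence by one, which `B` does not see. If `A ≤ L`
and `A f ≤ A (f ∘ T)` always, then `A f ≤ A (f ∘ T^[n]) ≤ L (f ∘ T^[n])` for every `n`, and `B`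
preserves lower bounds; an invariant prevision makes the sequence constant.
-/

open Set

section

variable {X : Type*}

lemma isGamble_iff_exists_abs_le {f : X → ℝ} : IsGamble f ↔ ∃ C, ∀ x, |f x| ≤ C := by
  rw [IsGamble, and_comm, ← isBounded_iff_bddBelow_bddAbove, isBounded_iff_forall_norm_le]
  simp only [forall_mem_range, Real.norm_eq_abs]

lemma IsGamble.comp {Y : Type*} {f : X → ℝ} (hf : IsGamble f) (g : Y → X) :
    IsGamble (f ∘ g) :=
  ⟨hf.1.mono (range_comp_subset_range g f), hf.2.mono (range_comp_subset_range g f)⟩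

lemma IsGamble.add {f g : X → ℝ} (hf : IsGamble f) (hg : IsGamble g) : IsGamble (f + g) := by
  obtain ⟨C, hC⟩ := isGamble_iff_exists_abs_le.1 hf
  obtain ⟨D, hD⟩ := isGamble_iff_exists_abs_le.1 hg
  exact isGamble_iff_exists_abs_le.2
    ⟨C + D, fun x => (abs_add_le (f x) (g x)).trans (add_le_add (hC x) (hD x))⟩

lemma IsGamble.neg {f : X → ℝ} (hf : IsGamble f) : IsGamble (-f) := by
  obtain ⟨C, hC⟩ := isGamble_iff_exists_abs_le.1 hf
  exact isGamble_iff_exists_abs_le.2 ⟨C, fun x => (abs_neg (f x)).trans_le (hC x)⟩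

lemma IsGamble.smul {f : X → ℝ} (hf : IsGamble f) (c : ℝ) : IsGamble (c • f) := by
  obtain ⟨C, hC⟩ := isGamble_iff_exists_abs_le.1 hf
  refine isGamble_iff_exists_abs_le.2 ⟨|c| * C, fun x => ?_⟩
  rw [Pi.smul_apply, smul_eq_mul, abs_mul]
  exact mul_le_mul_of_nonneg_left (hC x) (abs_nonneg c)

lemma isGamble_const (c : ℝ) : IsGamble (fun _ : X => c) :=
  isGamble_iff_exists_abs_le.2 ⟨|c|, fun _ => le_rfl⟩

lemma sInf_range_le_sInf_range_comp {f : X → ℝ} (hf : BddBelow (range f)) (g : X → X) :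
    sInf (range f) ≤ sInf (range (f ∘ g)) := by
  cases isEmpty_or_nonempty X
  · simp only [range_eq_empty, le_refl]
  · exact csInf_le_csInf hf (range_nonempty _) (range_comp_subset_range g f)

namespace IsCoherentPrevision

variable {P : (X → ℝ) → ℝ}

lemma apply_zero (hP : IsCoherentPrevision P) : P 0 = 0 := by
  have h := hP.1 0 0 (isGamble_const 0) (isGamble_const 0)
  rw [add_zero] at h
  linarith

lemma apply_neg (hP : IsCoherentPrevision P) {f : X → ℝ} (hf : IsGamble f) :
    P (-f) = -P f := by
  have h := hP.1 f (-f) hf hf.neg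
  rw [add_neg_cancel, hP.apply_zero] at h
  linarith

variable [Nonempty X]

lemma le_apply_of_forall_le (hP : IsCoherentPrevision P) {f : X → ℝ} (hf : IsGamble f) {a : ℝ}
    (h : ∀ x, a ≤ f x) : a ≤ P f :=
  (le_csInf (range_nonempty f) (forall_mem_range.2 h)).trans (hP.2 f hf)

lemma apply_le_of_forall_le (hP : IsCoherentPrevision P) {f : X → ℝ} (hf : IsGamble f) {a : ℝ}
    (h : ∀ x, f x ≤ a) : P f ≤ a := by
  have := hP.le_apply_of_forall_le hf.neg (a := -a) fun x => neg_le_neg (h x)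
  rw [hP.apply_neg hf] at this
  linarith

lemma apply_const (hP : IsCoherentPrevision P) (c : ℝ) : P (fun _ => c) = c :=
  le_antisymm (hP.apply_le_of_forall_le (isGamble_const c) fun _ => le_rfl)
    (hP.le_apply_of_forall_le (isGamble_const c) fun _ => le_rfl)

lemma mono (hP : IsCoherentPrevision P) {f g : X → ℝ} (hf : IsGamble f) (hg : IsGamble g)
    (hfg : ∀ x, f x ≤ g x) : P f ≤ P g := by
  have hgf : IsGamble (g + -f) := hg.add hf.neg
  have h0 : 0 ≤ P (g + -f) := hP.le_apply_of_forall_le hgf fun x => by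
    simpa [← sub_eq_add_neg] using hfg x
  have hsum := hP.1 f (g + -f) hf hgf
  rw [add_add_neg_cancel'_right] at hsum
  linarith

/-- `a ↦ P (a • f)` is additive and bounded by `|a| * sup |f|`, hence continuous, hence
real-linear. -/
lemma apply_smul (hP : IsCoherentPrevision P) {f : X → ℝ} (hf : IsGamble f) (c : ℝ) :
    P (c • f) = c * P f := by
  obtain ⟨C, hC⟩ := isGamble_iff_exists_abs_le.1 hf
  let h : ℝ →+ ℝ := AddMonoidHom.mk' (fun a => P (a • f)) fun a b => by
    rw [add_smul]; exact hP.1 _ _ (hf.smul a) (hf.smul b)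
  have hbound : ∀ a, ‖h a‖ ≤ C * ‖a‖ := fun a => by
    have haf : ∀ x, |(a • f) x| ≤ |a| * C := fun x => by
      rw [Pi.smul_apply, smul_eq_mul, abs_mul]
      exact mul_le_mul_of_nonneg_left (hC x) (abs_nonneg a)
    rw [Real.norm_eq_abs, Real.norm_eq_abs, mul_comm, abs_le]
    exact ⟨hP.le_apply_of_forall_le (hf.smul a) fun x => (abs_le.1 (haf x)).1,
      hP.apply_le_of_forall_le (hf.smul a) fun x => (abs_le.1 (haf x)).2⟩
  have := map_real_smul h (AddMonoidHomClass.continuous_of_bound h C hbound) c 1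
  simpa [h] using this

end IsCoherentPrevision

namespace IsCoherentLowerPrevision

variable {L : (X → ℝ) → ℝ}

lemma apply_zero (hL : IsCoherentLowerPrevision L) : L 0 = 0 := by
  simpa using hL.2.2 0 (isGamble_const 0) 0 le_rfl

lemma apply_le_neg_sInf_range_neg (hL : IsCoherentLowerPrevision L) {f : X → ℝ}
    (hf : IsGamble f) : L f ≤ -sInf (range (-f)) := by
  have h := hL.2.1 f (-f) hf hf.neg
  rw [add_neg_cancel, hL.apply_zero] at h
  linarith [hL.1 (-f) hf.neg]

end IsCoherentLowerPrevision

section Iterate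

variable {Q : (X → ℝ) → ℝ} {T : X → X} {f : X → ℝ}

lemma le_apply_comp_iterate (hQ : ∀ f, IsGamble f → Q f ≤ Q (f ∘ T)) (hf : IsGamble f) :
    ∀ n, Q f ≤ Q (f ∘ T^[n])
  | 0 => le_rfl
  | n + 1 => by
    rw [Function.iterate_succ, ← Function.comp_assoc]
    exact (le_apply_comp_iterate hQ hf n).trans (hQ _ (hf.comp _))

lemma apply_comp_iterate (hQ : ∀ f, IsGamble f → Q (f ∘ T) = Q f) (hf : IsGamble f) :
    ∀ n, Q (f ∘ T^[n]) = Q f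
  | 0 => rfl
  | n + 1 => by
    rw [Function.iterate_succ, ← Function.comp_assoc, hQ _ (hf.comp _)]
    exact apply_comp_iterate hQ hf n

end Iterate

section Transfer

variable {B : (ℕ → ℝ) → ℝ} {L : (X → ℝ) → ℝ} {T : X → X}

/-- The sequence `f_L` of the statement, so that `transferLB B L T f = B (orbitSeq L T f)`. -/
abbrev orbitSeq (L : (X → ℝ) → ℝ) (T : X → X) (f : X → ℝ) : ℕ → ℝ :=
  fun n => L (f ∘ T^[n])

lemma sInf_range_le_orbitSeq (hL : IsCoherentLowerPrevision L) {f : X → ℝ} (hf : IsGamble f)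
    (n : ℕ) : sInf (range f) ≤ orbitSeq L T f n :=
  (sInf_range_le_sInf_range_comp hf.2 _).trans (hL.1 _ (hf.comp _))

lemma orbitSeq_le_neg_sInf_range_neg (hL : IsCoherentLowerPrevision L) {f : X → ℝ}
    (hf : IsGamble f) (n : ℕ) : orbitSeq L T f n ≤ -sInf (range (-f)) :=
  (hL.apply_le_neg_sInf_range_neg (hf.comp _)).trans
    (neg_le_neg (sInf_range_le_sInf_range_comp hf.neg.2 _))

lemma isGamble_orbitSeq (hL : IsCoherentLowerPrevision L) {f : X → ℝ} (hf : IsGamble f) :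
    IsGamble (orbitSeq L T f) :=
  ⟨⟨_, forall_mem_range.2 (orbitSeq_le_neg_sInf_range_neg hL hf)⟩,
    ⟨_, forall_mem_range.2 (sInf_range_le_orbitSeq hL hf)⟩⟩

lemma transferLB_comp (hB : IsBanachLimit B) (hL : IsCoherentLowerPrevision L) {f : X → ℝ}
    (hf : IsGamble f) : transferLB B L T (f ∘ T) = transferLB B L T f := by
  have hshift : orbitSeq L T (f ∘ T) = fun n => orbitSeq L T f (n + 1) := by
    funext n
    change L ((f ∘ T) ∘ T^[n]) = L (f ∘ T^[n + 1])
    rw [Function.iterate_succ']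
    rfl
  change B (orbitSeq L T (f ∘ T)) = B (orbitSeq L T f)
  rw [hshift]
  exact hB.2 _ (isGamble_orbitSeq hL hf)

lemma isCoherentLowerPrevision_transferLB (hB : IsBanachLimit B)
    (hL : IsCoherentLowerPrevision L) : IsCoherentLowerPrevision (transferLB B L T) := by
  refine ⟨fun f hf => ?_, fun f g hf hg => ?_, fun f hf c hc => ?_⟩
  · exact hB.1.le_apply_of_forall_le (isGamble_orbitSeq hL hf) (sInf_range_le_orbitSeq hL hf)
  · change B (orbitSeq L T f) + B (orbitSeq L T g) ≤ B (orbitSeq L T (f + g))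
    rw [← hB.1.1 _ _ (isGamble_orbitSeq hL hf) (isGamble_orbitSeq hL hg)]
    exact hB.1.mono ((isGamble_orbitSeq hL hf).add (isGamble_orbitSeq hL hg))
      (isGamble_orbitSeq hL (hf.add hg)) fun n => hL.2.1 _ _ (hf.comp _) (hg.comp _)
  · have hsmul : orbitSeq L T (c • f) = c • orbitSeq L T f :=
      funext fun n => hL.2.2 _ (hf.comp _) c hc
    change B (orbitSeq L T (c • f)) = c * B (orbitSeq L T f)
    rw [hsmul]
    exact hB.1.apply_smul (isGamble_orbitSeq hL hf) c

lemma isCoherentPrevision_transferLB (hB : IsBanachLimit B) (hL : IsCoherentLowerPrevision L)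
    (hP : IsCoherentPrevision L) : IsCoherentPrevision (transferLB B L T) := by
  refine ⟨fun f g hf hg => ?_, (isCoherentLowerPrevision_transferLB hB hL).1⟩
  have hadd : orbitSeq L T (f + g) = orbitSeq L T f + orbitSeq L T g :=
    funext fun n => hP.1 _ _ (hf.comp _) (hg.comp _)
  change B (orbitSeq L T (f + g)) = B (orbitSeq L T f) + B (orbitSeq L T g)
  rw [hadd]
  exact hB.1.1 _ _ (isGamble_orbitSeq hL hf) (isGamble_orbitSeq hL hg)

lemma le_transferLB (hB : IsBanachLimit B) (hL : IsCoherentLowerPrevision L)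
    {A : (X → ℝ) → ℝ} (hAT : ∀ f, IsGamble f → A f ≤ A (f ∘ T))
    (hAL : ∀ f, IsGamble f → A f ≤ L f) {f : X → ℝ} (hf : IsGamble f) :
    A f ≤ transferLB B L T f :=
  hB.1.le_apply_of_forall_le (isGamble_orbitSeq hL hf) fun n =>
    (le_apply_comp_iterate hAT hf n).trans (hAL _ (hf.comp _))

lemma transferLB_eq_of_comp_eq (hB : IsBanachLimit B)
    (hLT : ∀ f, IsGamble f → L (f ∘ T) = L f) {f : X → ℝ} (hf : IsGamble f) :
    transferLB B L T f = L f := by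
  change B (orbitSeq L T f) = L f
  rw [show orbitSeq L T f = fun _ => L f from funext (apply_comp_iterate hLT hf)]
  exact hB.1.apply_const (L f)

end Transfer

end

theorem stmt16_general (X : Type*) (B : (ℕ → ℝ) → ℝ) (hB : IsBanachLimit B)
    (L : (X → ℝ) → ℝ) (hL : IsCoherentLowerPrevision L) (T : X → X) :
    (IsCoherentLowerPrevision (transferLB B L T) ∧
      ∀ f : X → ℝ, IsGamble f → transferLB B L T (f ∘ T) = transferLB B L T f) ∧
    (∀ A : (X → ℝ) → ℝ, IsCoherentLowerPrevision A →
      (∀ f : X → ℝ, IsGamble f → A f ≤ A (f ∘ T)) →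
      (∀ f : X → ℝ, IsGamble f → A f ≤ L f) →
      ∀ f : X → ℝ, IsGamble f → A f ≤ transferLB B L T f) ∧
    (IsCoherentPrevision L →
      (IsCoherentPrevision (transferLB B L T) ∧
        ∀ f : X → ℝ, IsGamble f → transferLB B L T (f ∘ T) = transferLB B L T f)) ∧
    (IsCoherentPrevision L → (∀ f : X → ℝ, IsGamble f → L (f ∘ T) = L f) →
      ∀ f : X → ℝ, IsGamble f → transferLB B L T f = L f) :=
  have invariant f (hf : IsGamble f) := transferLB_comp (T := T) hB hL hf
  ⟨⟨isCoherentLowerPrevision_transferLB hB hL, invariant⟩,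
    fun _ _ hAT hAL _ hf => le_transferLB hB hL hAT hAL hf,
    fun hP => ⟨isCoherentPrevision_transferLB hB hL hP, invariant⟩,
    fun _ hLT _ hf => transferLB_eq_of_comp_eq hB hLT hf⟩

theorem stmt16 (X : Type*) [Nonempty X] (B : (ℕ → ℝ) → ℝ) (hB : IsBanachLimit B)
    (L : (X → ℝ) → ℝ) (hL : IsCoherentLowerPrevision L) (T : X → X) :
    (IsCoherentLowerPrevision (transferLB B L T) ∧
      ∀ f : X → ℝ, IsGamble f → transferLB B L T (f ∘ T) = transferLB B L T f) ∧
    (∀ A : (X → ℝ) → ℝ, IsCoherentLowerPrevision A →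
      (∀ f : X → ℝ, IsGamble f → A f ≤ A (f ∘ T)) →
      (∀ f : X → ℝ, IsGamble f → A f ≤ L f) →
      ∀ f : X → ℝ, IsGamble f → A f ≤ transferLB B L T f) ∧
    (IsCoherentPrevision L →
      (IsCoherentPrevision (transferLB B L T) ∧
        ∀ f : X → ℝ, IsGamble f → transferLB B L T (f ∘ T) = transferLB B L T f)) ∧
    (IsCoherentPrevision L → (∀ f : X → ℝ, IsGamble f → L (f ∘ T) = L f) →
      ∀ f : X → ℝ, IsGamble f → transferLB B L T f = L f) :=
  stmt16_general X B hB L hL T
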